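/- arXiv:1402.1286 — 7 statements merged into one kernel-verified Lean document; each statement's English description precedes it below -/
import Mathlib

section
/- Let X be a topological space. A collection C of subsets of X is a complete closed base of X (i.e., a closed base containing ∅ and X, closed under finite unions and finite intersections) if and only if there exists a generalized topology Cov_X in X such that C is the collection of all closed sets of the generalized topological space (X, Cov_X). -/
open Set TopologicalSpace Topology

universe u

/-- A generalized topology in the sense of Delfs–Knebusch (axioms following
Piękosz, Definition 2.2.1): `Cov` is the collection of admissible open families,
and the open sets are the members of `⋃₀ Cov`. -/
structure GenTop (X : Type u) : Type u where
  Cov : Set (Set (Set X))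
  univ_open : Set.univ ∈ ⋃₀ Cov
  finite_admissible : ∀ 𝒰 : Set (Set X), 𝒰.Finite → 𝒰 ⊆ ⋃₀ Cov → 𝒰 ∈ Cov
  union_open : ∀ 𝒰 ∈ Cov, ⋃₀ 𝒰 ∈ ⋃₀ Cov
  restrict : ∀ 𝒰 ∈ Cov, ∀ V ∈ ⋃₀ Cov, (fun U => V ∩ U) '' 𝒰 ∈ Cov
  transitive : ∀ 𝒰 ∈ Cov, ∀ f : Set X → Set (Set X),
    (∀ U ∈ 𝒰, f U ∈ Cov ∧ ⋃₀ f U = U) → {V : Set X | ∃ U ∈ 𝒰, V ∈ f U} ∈ Cov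
  coarsen : ∀ 𝒰 ∈ Cov, ∀ 𝒱 ⊆ ⋃₀ Cov, (∀ U ∈ 𝒰, ∃ V ∈ 𝒱, U ⊆ V) →
    ⋃₀ 𝒱 = ⋃₀ 𝒰 → 𝒱 ∈ Cov
  regular : ∀ 𝒰 ∈ Cov, ∀ W ⊆ ⋃₀ 𝒰, (∀ U ∈ 𝒰, W ∩ U ∈ ⋃₀ Cov) → W ∈ ⋃₀ Cov

namespace GenTop

variable {X : Type u} (G : GenTop X)

/-- The open sets of a gts. -/
def Opens : Set (Set X) := ⋃₀ G.Cov

/-- The closed sets of a gts. -/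
def Closeds : Set (Set X) := {A : Set X | Aᶜ ∈ G.Opens}

/-- The topologization of a gts: the topology generated by the open sets. -/
def topol : TopologicalSpace X := TopologicalSpace.generateFrom G.Opens

/-- A gts is weakly normal if disjoint sets, each a singleton or closed,
can be separated by disjoint open sets. -/
def WeaklyNormal : Prop :=
  ∀ A₁ A₂ : Set X, ((∃ x, A₁ = {x}) ∨ A₁ ∈ G.Closeds) →
    ((∃ x, A₂ = {x}) ∨ A₂ ∈ G.Closeds) → Disjoint A₁ A₂ →
    ∃ W₁ ∈ G.Opens, ∃ W₂ ∈ G.Opens, Disjoint W₁ W₂ ∧ A₁ ⊆ W₁ ∧ A₂ ⊆ W₂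

end GenTop

/-- A closed base of a topological space. -/
def IsClosedBase {X : Type u} [TopologicalSpace X] (C : Set (Set X)) : Prop :=
  (∀ A ∈ C, IsClosed A) ∧
  ∀ A : Set X, IsClosed A → ∀ x ∉ A, ∃ B ∈ C, x ∉ B ∧ A ⊆ B

/-- A complete closed base: a closed base containing `∅` and `univ`, closed
under finite unions and finite intersections. -/
def IsCompleteClosedBase {X : Type u} [TopologicalSpace X] (C : Set (Set X)) : Prop :=
  IsClosedBase C ∧ ∅ ∈ C ∧ Set.univ ∈ C ∧
  (∀ A ∈ C, ∀ B ∈ C, A ∪ B ∈ C) ∧ (∀ A ∈ C, ∀ B ∈ C, A ∩ B ∈ C)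

/-- A Wallman base of a topological space. -/
def IsWallmanBase {X : Type u} [TopologicalSpace X] (C : Set (Set X)) : Prop :=
  IsClosedBase C ∧
  (∀ A ∈ C, ∀ B ∈ C, A ∪ B ∈ C) ∧ (∀ A ∈ C, ∀ B ∈ C, A ∩ B ∈ C) ∧
  (∀ A : Set X, ((∃ x, A = {x}) ∨ IsClosed A) → ∀ x ∉ A, ∃ B ∈ C, x ∈ B ∧ B ⊆ Aᶜ) ∧
  (∀ A₁ ∈ C, ∀ A₂ ∈ C, Disjoint A₁ A₂ →
    ∃ C₁ ∈ C, ∃ C₂ ∈ C, C₁ ∪ C₂ = Set.univ ∧ A₁ ∩ C₁ = ∅ ∧ A₂ ∩ C₂ = ∅)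

/-!
The open sets of a generalized topological space form a bounded lattice of sets, and they are a
base of the topology they generate, since they are closed under finite intersections.
Conversely, a bounded lattice of sets `O` carries the smallest generalized topology with
open sets `O`: the admissible families are those subfamilies of `O` whose union is already
covered by a finite subfamily. Passing to complements turns these two facts into the theorem.
-/

theorem InfClosed.compl_image {α : Type*} [BooleanAlgebra α] {s : Set α} (hs : InfClosed s) :
    SupClosed (compl '' s) := by
  rintro _ ⟨a, ha, rfl⟩ _ ⟨b, hb, rfl⟩
  exact ⟨a ⊓ b, hs ha hb, compl_inf⟩

theorem SupClosed.compl_image {α : Type*} [BooleanAlgebra α] {s : Set α} (hs : SupClosed s) :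
    InfClosed (compl '' s) := by
  rintro _ ⟨a, ha, rfl⟩ _ ⟨b, hb, rfl⟩
  exact ⟨a ⊔ b, hs ha hb, compl_sup⟩

theorem isClosedBase_iff_isTopologicalBasis_compl_image {X : Type u} [TopologicalSpace X]
    {C : Set (Set X)} : IsClosedBase C ↔ IsTopologicalBasis (compl '' C) := by
  constructor
  · rintro ⟨hclosed, hbase⟩
    refine isTopologicalBasis_of_isOpen_of_nhds ?_ fun x U hxU hU => ?_
    · rintro _ ⟨A, hA, rfl⟩
      exact (hclosed A hA).isOpen_compl
    · obtain ⟨B, hB, hxB, hUB⟩ := hbase Uᶜ hU.isClosed_compl x (not_not_intro hxU)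
      exact ⟨Bᶜ, mem_image_of_mem _ hB, hxB, compl_subset_comm.1 hUB⟩
  · intro hb
    refine ⟨fun A hA => isOpen_compl_iff.1 (hb.isOpen (mem_image_of_mem _ hA)),
      fun A hA x hx => ?_⟩
    obtain ⟨_, ⟨B, hB, rfl⟩, hxB, hBA⟩ := hb.exists_subset_of_mem_open hx hA.isOpen_compl
    exact ⟨B, hB, hxB, compl_subset_compl.1 hBA⟩

namespace GenTop

variable {X : Type u}

section Lattice

variable (G : GenTop X)

theorem mem_closeds_iff {A : Set X} : A ∈ G.Closeds ↔ Aᶜ ∈ G.Opens :=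
  Iff.rfl

theorem closeds_eq_compl_image : G.Closeds = compl '' G.Opens :=
  preimage_compl_eq_image_compl _

theorem sUnion_mem_opens_of_finite {𝒰 : Set (Set X)} (hfin : 𝒰.Finite) (hsub : 𝒰 ⊆ G.Opens) :
    ⋃₀ 𝒰 ∈ G.Opens :=
  G.union_open 𝒰 (G.finite_admissible 𝒰 hfin hsub)

theorem empty_mem_opens : ∅ ∈ G.Opens := by
  simpa using G.sUnion_mem_opens_of_finite finite_empty (empty_subset _)

theorem supClosed_opens : SupClosed G.Opens := fun U hU V hV => by
  simpa using G.sUnion_mem_opens_of_finite (toFinite {U, V}) (pair_subset hU hV)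

theorem finiteInter_opens : FiniteInter G.Opens where
  univ_mem := G.univ_open
  inter_mem U hU V hV := by
    have h := G.restrict {V}
      (G.finite_admissible {V} (finite_singleton V) (singleton_subset_iff.2 hV)) U hU
    rw [image_singleton] at h
    exact ⟨_, h, mem_singleton _⟩

theorem isTopologicalBasis_opens : @IsTopologicalBasis X G.topol G.Opens :=
  letI := G.topol
  isTopologicalBasis_of_subbasis_of_finiteInter rfl G.finiteInter_opens

end Lattice

def finiteSubcoverFamilies (O : Set (Set X)) : Set (Set (Set X)) :=
  {𝒰 | 𝒰 ⊆ O ∧ ∃ 𝒱 ⊆ 𝒰, 𝒱.Finite ∧ ⋃₀ 𝒰 ⊆ ⋃₀ 𝒱}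

section FiniteSubcoverFamilies

variable {O : Set (Set X)}

theorem finite_mem_finiteSubcoverFamilies {𝒰 : Set (Set X)} (hfin : 𝒰.Finite) (hsub : 𝒰 ⊆ O) :
    𝒰 ∈ finiteSubcoverFamilies O :=
  ⟨hsub, 𝒰, Subset.rfl, hfin, Subset.rfl⟩

theorem sUnion_finiteSubcoverFamilies (O : Set (Set X)) : ⋃₀ finiteSubcoverFamilies O = O := by
  refine subset_antisymm (fun U ⟨𝒰, h𝒰, hU⟩ => h𝒰.1 hU) fun U hU => ?_
  exact ⟨{U}, finite_mem_finiteSubcoverFamilies (finite_singleton U) (singleton_subset_iff.2 hU),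
    mem_singleton U⟩

theorem finiteSubcoverFamilies_union_open (h0 : ∅ ∈ O) (hsup : SupClosed O) {𝒰 : Set (Set X)}
    (h𝒰 : 𝒰 ∈ finiteSubcoverFamilies O) : ⋃₀ 𝒰 ∈ O := by
  obtain ⟨hsub, 𝒱, h𝒱𝒰, h𝒱, hcov⟩ := h𝒰
  rw [subset_antisymm hcov (sUnion_mono h𝒱𝒰)]
  exact hsup.sSup_mem h𝒱 h0 (h𝒱𝒰.trans hsub)

theorem finiteSubcoverFamilies_restrict (hinf : InfClosed O) {𝒰 : Set (Set X)}
    (h𝒰 : 𝒰 ∈ finiteSubcoverFamilies O) {V : Set X} (hV : V ∈ O) :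
    (fun U => V ∩ U) '' 𝒰 ∈ finiteSubcoverFamilies O := by
  obtain ⟨hsub, 𝒱, h𝒱𝒰, h𝒱, hcov⟩ := h𝒰
  refine ⟨image_subset_iff.2 fun U hU => hinf hV (hsub hU), _, image_mono h𝒱𝒰, h𝒱.image _, ?_⟩
  simp only [sUnion_image, ← inter_iUnion₂, ← sUnion_eq_biUnion]
  exact inter_subset_inter_right V hcov

theorem finiteSubcoverFamilies_transitive {𝒰 : Set (Set X)} (h𝒰 : 𝒰 ∈ finiteSubcoverFamilies O)
    (f : Set X → Set (Set X)) (hf : ∀ U ∈ 𝒰, f U ∈ finiteSubcoverFamilies O ∧ ⋃₀ f U = U) :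
    {V : Set X | ∃ U ∈ 𝒰, V ∈ f U} ∈ finiteSubcoverFamilies O := by
  obtain ⟨-, 𝒱, h𝒱𝒰, h𝒱, hcov⟩ := h𝒰
  choose! 𝒲 h𝒲f h𝒲 hcov𝒲 using fun U (hU : U ∈ 𝒱) => (hf U (h𝒱𝒰 hU)).1.2
  refine ⟨fun V ⟨U, hU, hV⟩ => (hf U hU).1.1 hV, ⋃ U ∈ 𝒱, 𝒲 U,
    iUnion₂_subset fun U hU V hV => ⟨U, h𝒱𝒰 hU, h𝒲f U hU hV⟩, h𝒱.biUnion h𝒲, ?_⟩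
  rintro x ⟨V, ⟨U, hU, hV⟩, hxV⟩
  have hxU : x ∈ U := (hf U hU).2 ▸ mem_sUnion_of_mem hxV hV
  obtain ⟨U', hU', hxU'⟩ := hcov (mem_sUnion_of_mem hxU hU)
  obtain ⟨W, hW, hxW⟩ := hcov𝒲 U' hU' ((hf U' (h𝒱𝒰 hU')).2.symm ▸ hxU')
  exact ⟨W, mem_biUnion hU' hW, hxW⟩

theorem finiteSubcoverFamilies_coarsen {𝒰 : Set (Set X)} (h𝒰 : 𝒰 ∈ finiteSubcoverFamilies O)
    {𝒱 : Set (Set X)} (h𝒱 : 𝒱 ⊆ O) (href : ∀ U ∈ 𝒰, ∃ V ∈ 𝒱, U ⊆ V) (hun : ⋃₀ 𝒱 = ⋃₀ 𝒰) :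
    𝒱 ∈ finiteSubcoverFamilies O := by
  obtain ⟨-, 𝒲, h𝒲𝒰, h𝒲, hcov⟩ := h𝒰
  choose! g hg𝒱 hg using fun U (hU : U ∈ 𝒲) => href U (h𝒲𝒰 hU)
  refine ⟨h𝒱, g '' 𝒲, image_subset_iff.2 hg𝒱, h𝒲.image g, ?_⟩
  rw [hun, sUnion_image]
  exact hcov.trans (sUnion_subset fun U hU => (hg U hU).trans (subset_biUnion_of_mem hU))

theorem finiteSubcoverFamilies_regular (h0 : ∅ ∈ O) (hsup : SupClosed O) {𝒰 : Set (Set X)}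
    (h𝒰 : 𝒰 ∈ finiteSubcoverFamilies O) {W : Set X} (hW : W ⊆ ⋃₀ 𝒰)
    (hWU : ∀ U ∈ 𝒰, W ∩ U ∈ O) : W ∈ O := by
  obtain ⟨-, 𝒱, h𝒱𝒰, h𝒱, hcov⟩ := h𝒰
  have hW_eq : W = ⋃ U ∈ 𝒱, W ∩ U := by
    rw [← inter_iUnion₂, ← sUnion_eq_biUnion, inter_eq_left.2 (hW.trans hcov)]
  rw [hW_eq]
  exact hsup.biSup_mem h𝒱 h0 fun U hU => hWU U (h𝒱𝒰 hU)

def ofLattice (O : Set (Set X)) (h0 : ∅ ∈ O) (hsup : SupClosed O) (hinter : FiniteInter O) :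
    GenTop X where
  Cov := finiteSubcoverFamilies O
  univ_open := (sUnion_finiteSubcoverFamilies O).symm ▸ hinter.univ_mem
  finite_admissible _ hfin hsub :=
    finite_mem_finiteSubcoverFamilies hfin (sUnion_finiteSubcoverFamilies O ▸ hsub)
  union_open _ h𝒰 := (sUnion_finiteSubcoverFamilies O).symm ▸
    finiteSubcoverFamilies_union_open h0 hsup h𝒰
  restrict _ h𝒰 _ hV := finiteSubcoverFamilies_restrict (fun _ hU _ hV => hinter.inter_mem hU hV)
    h𝒰 (sUnion_finiteSubcoverFamilies O ▸ hV)
  transitive _ h𝒰 f hf := finiteSubcoverFamilies_transitive h𝒰 f hf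
  coarsen _ h𝒰 _ h𝒱 href hun :=
    finiteSubcoverFamilies_coarsen h𝒰 (sUnion_finiteSubcoverFamilies O ▸ h𝒱) href hun
  regular _ h𝒰 _ hW hWU := (sUnion_finiteSubcoverFamilies O).symm ▸
    finiteSubcoverFamilies_regular h0 hsup h𝒰 hW (sUnion_finiteSubcoverFamilies O ▸ hWU)

theorem opens_ofLattice (h0 : ∅ ∈ O) (hsup : SupClosed O) (hinter : FiniteInter O) :
    (ofLattice O h0 hsup hinter).Opens = O :=
  sUnion_finiteSubcoverFamilies O

end FiniteSubcoverFamilies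

end GenTop

/-- A collection `C` is a complete closed base of a topological space `X` iff
there is a generalized topology on `X`, inducing the topology of `X`, whose
closed sets are exactly `C`. -/
theorem stmt_0 {X : Type u} [t : TopologicalSpace X] (C : Set (Set X)) :
    IsCompleteClosedBase C ↔ ∃ G : GenTop X, C = G.Closeds ∧ G.topol = t := by
  constructor
  · rintro ⟨hbase, hempty, huniv, hunion, hinter⟩
    let G := GenTop.ofLattice (compl '' C) ⟨univ, huniv, compl_univ⟩
      (InfClosed.compl_image hinter) ⟨⟨∅, hempty, compl_empty⟩, SupClosed.compl_image hunion⟩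
    have hG : G.Opens = compl '' C := GenTop.opens_ofLattice ..
    refine ⟨G, ?_, ?_⟩
    · rw [G.closeds_eq_compl_image, hG, compl_compl_image]
    · rw [GenTop.topol, hG]
      exact (isClosedBase_iff_isTopologicalBasis_compl_image.1 hbase).eq_generateFrom.symm
  · rintro ⟨G, rfl, rfl⟩
    let := G.topol
    have hbase : IsClosedBase G.Closeds := by
      rw [isClosedBase_iff_isTopologicalBasis_compl_image, G.closeds_eq_compl_image,
        compl_compl_image]
      exact G.isTopologicalBasis_opens
    refine ⟨hbase, ?_, ?_, fun A hA B hB => ?_, fun A hA B hB => ?_⟩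
    · rw [G.mem_closeds_iff, compl_empty]
      exact G.univ_open
    · rw [G.mem_closeds_iff, compl_univ]
      exact G.empty_mem_opens
    · rw [G.mem_closeds_iff, compl_union]
      exact G.finiteInter_opens.inter_mem hA hB
    · rw [G.mem_closeds_iff, compl_inter]
      exact G.supClosed_opens hA hB
end

section
/- Let Y be a subset of a generalized topological space X. Then Y is topologically compact in X (every cover of Y by weakly open sets has a finite subcover) if and only if Y is absolutely compact in X (every cover of Y by open sets of X has a finite subcover). Moreover, if Y is absolutely compact in X, then Y is admissibly compact in X (every admissible open family covering Y has a finite subfamily covering Y). -/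
open Set TopologicalSpace Topology

universe u

namespace GenTop

variable {X : Type u} (G : GenTop X)

/-- `Y` is topologically compact in the gts `X`: every cover of `Y` by weakly
open sets has a finite subcover. -/
def TopCompactIn (Y : Set X) : Prop :=
  ∀ 𝒱 : Set (Set X), (∀ V ∈ 𝒱, IsOpen[G.topol] V) → Y ⊆ ⋃₀ 𝒱 →
    ∃ 𝒰 ⊆ 𝒱, 𝒰.Finite ∧ Y ⊆ ⋃₀ 𝒰

/-- `Y` is absolutely compact in the gts `X`: every cover of `Y` by open sets
has a finite subcover. -/
def AbsCompactIn (Y : Set X) : Prop :=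
  ∀ 𝒱 ⊆ G.Opens, Y ⊆ ⋃₀ 𝒱 → ∃ 𝒰 ⊆ 𝒱, 𝒰.Finite ∧ Y ⊆ ⋃₀ 𝒰

/-- `Y` is admissibly compact in the gts `X`: every admissible open family
covering `Y` has a finite subfamily covering `Y`. -/
def AdmCompactIn (Y : Set X) : Prop :=
  ∀ 𝒱 ∈ G.Cov, Y ⊆ ⋃₀ 𝒱 → ∃ 𝒰 ⊆ 𝒱, 𝒰.Finite ∧ Y ⊆ ⋃₀ 𝒰

end GenTop

/-! The weakly open sets form the topology generated by the open sets, so by the Alexander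
subbasis theorem covers by open sets already detect compactness for this topology. -/

theorem IsCompact.elim_finite_sUnion_subcover {X : Type*} [TopologicalSpace X] {s : Set X}
    (hs : IsCompact s) {𝒱 : Set (Set X)} (h𝒱 : ∀ V ∈ 𝒱, IsOpen V) (hcover : s ⊆ ⋃₀ 𝒱) :
    ∃ 𝒰 ⊆ 𝒱, 𝒰.Finite ∧ s ⊆ ⋃₀ 𝒰 := by
  rw [sUnion_eq_biUnion] at hcover
  obtain ⟨𝒰, h𝒰𝒱, h𝒰, hs𝒰⟩ := hs.elim_finite_subcover_image h𝒱 hcover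
  exact ⟨𝒰, h𝒰𝒱, h𝒰, by rwa [sUnion_eq_biUnion]⟩

namespace GenTop

variable {X : Type u} {G : GenTop X} {Y : Set X}

theorem topCompactIn_of_isCompact (hY : @IsCompact X G.topol Y) : G.TopCompactIn Y :=
  fun _ h𝒱 hcover => @IsCompact.elim_finite_sUnion_subcover _ G.topol _ hY _ h𝒱 hcover

theorem TopCompactIn.absCompactIn (hY : G.TopCompactIn Y) : G.AbsCompactIn Y :=
  fun 𝒱 h𝒱 => hY 𝒱 fun _ hV => isOpen_generateFrom_of_mem (h𝒱 hV)

theorem AbsCompactIn.isCompact (hY : G.AbsCompactIn Y) : @IsCompact X G.topol Y :=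
  @isCompact_generateFrom _ G.topol _ rfl _ hY

theorem AbsCompactIn.admCompactIn (hY : G.AbsCompactIn Y) : G.AdmCompactIn Y :=
  fun 𝒱 h𝒱 => hY 𝒱 (subset_sUnion_of_mem h𝒱)

end GenTop

/-- Topological and absolute compactness of a subset of a gts are equivalent,
and absolute compactness implies admissible compactness. -/
theorem stmt_6 {X : Type u} (G : GenTop X) (Y : Set X) :
    (G.TopCompactIn Y ↔ G.AbsCompactIn Y) ∧
    (G.AbsCompactIn Y → G.AdmCompactIn Y) :=
  ⟨⟨GenTop.TopCompactIn.absCompactIn,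
      fun hY => GenTop.topCompactIn_of_isCompact hY.isCompact⟩,
    GenTop.AbsCompactIn.admCompactIn⟩
end

section
/- In ZF, a topological space X is compact if and only if for every topological space Y, the projection π_Y : X × Y → Y (with X × Y given the product topology) is a closed map. -/
/-!
Compact spaces have closed projections by the tube lemma. Conversely, given a proper filter `f`
on `X`, adjoin a point `∞` to `X` whose neighbourhoods are generated by `f` (Mrówka's space
`Option X`, with `∞ = none`). The projection to `Option X` of the closure of the graph of `some`
is closed and contains `range some`, hence `∞`; and a point `(x, ∞)` in the closure of this graph
is exactly a cluster point `x` of `f`. No ultrafilters, hence no choice, are involved.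
-/

open Filter Set Topology

universe u

theorem mem_closure_range_graph_iff {X Y : Type*} [TopologicalSpace X] [TopologicalSpace Y]
    {e : X → Y} {x : X} {y : Y} :
    (x, y) ∈ closure (range fun a => (a, e a)) ↔ (𝓝 x ⊓ comap e (𝓝 y)).NeBot := by
  rw [mem_closure_iff_clusterPt, ClusterPt, nhds_prod_eq, ← map_comap, map_neBot_iff,
    comap_prod]
  simp only [Function.comp_def, comap_id']

section Mrowka

variable {X : Type*} [TopologicalSpace (Option X)] {f : Filter X}

theorem comap_some_nhds_none (hf : 𝓝 (none : Option X) = pure none ⊔ f.map some) :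
    comap some (𝓝 (none : Option X)) = f := by
  simp [hf, comap_sup, comap_map (Option.some_injective X), preimage]

theorem none_mem_closure_range_some [f.NeBot]
    (hf : 𝓝 (none : Option X) = pure none ⊔ f.map some) :
    (none : Option X) ∈ closure (range some) :=
  mem_closure_iff_clusterPt.2 <| NeBot.mono (map_neBot (f := f))
    (le_inf (hf ▸ le_sup_right) (le_principal_iff.2 range_mem_map))

theorem exists_clusterPt_of_isClosedMap_snd [TopologicalSpace X] [f.NeBot]
    (hf : 𝓝 (none : Option X) = pure none ⊔ f.map some)
    (h : IsClosedMap (Prod.snd : X × Option X → Option X)) : ∃ x, ClusterPt x f := by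
  have hrange : Prod.snd '' range (fun a : X => (a, some a)) = range some := by
    rw [← range_comp]; rfl
  obtain ⟨⟨x, y⟩, hx, rfl : y = none⟩ :=
    h.closure_image_subset _ (hrange ▸ none_mem_closure_range_some hf)
  exact ⟨x, by rwa [mem_closure_range_graph_iff, comap_some_nhds_none hf] at hx⟩

end Mrowka

/-- Kuratowski–Mrówka: a topological space `X` is compact iff for every
topological space `Y` the projection `X × Y → Y` is a closed map. -/
theorem stmt_9 (X : Type u) [TopologicalSpace X] :
    CompactSpace X ↔
      ∀ (Y : Type u) [TopologicalSpace Y], IsClosedMap (Prod.snd : X × Y → Y) := by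
  refine ⟨fun _ _ _ => isClosedMap_snd_of_compactSpace, fun h => ⟨fun f _ _ => ?_⟩⟩
  let _ : TopologicalSpace (Option X) := nhdsAdjoint none (f.map some)
  obtain ⟨x, hx⟩ :=
    exists_clusterPt_of_isClosedMap_snd (nhds_nhdsAdjoint_same _ _) (h (Option X))
  exact ⟨x, mem_univ x, hx⟩
end

section
/- Let X and Y be topological discrete gtses (i.e., gtses in which every subset is open and every family of open sets is admissible, with all subsets open). Then the GTS-product X ×_GTS Y is a topological discrete gts: every subset of X × Y is open and every family of subsets of X × Y is an admissible covering. -/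
open Set TopologicalSpace Topology

universe u

/-- The generating collection for the GTS-product generalized topology: the
preimages under the projections of the admissible families of the factors. -/
def prodGen {X Y : Type u} (GX : GenTop X) (GY : GenTop Y) :
    Set (Set (Set (X × Y))) :=
  {𝒲 | (∃ 𝒰 ∈ GX.Cov, 𝒲 = (fun U => Prod.fst ⁻¹' U) '' 𝒰) ∨
       (∃ 𝒱 ∈ GY.Cov, 𝒲 = (fun V => Prod.snd ⁻¹' V) '' 𝒱)}

/-! Fibres `Prod.fst ⁻¹' {x}` and `Prod.snd ⁻¹' {y}` form admissible families of the product,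
being preimages of the singleton covers of the discrete factors. Their common refinement, the
singleton cover of `X × Y`, is therefore admissible. A gts whose singleton cover is admissible is
topological discrete: every set is open by regularity, and every nonempty family is a coarsening
of the trace of the singleton cover on its union. -/

theorem sUnion_image_inter {α : Type*} (V : Set α) (𝒰 : Set (Set α)) :
    ⋃₀ ((V ∩ ·) '' 𝒰) = V ∩ ⋃₀ 𝒰 := by
  rw [sUnion_image, ← inter_iUnion₂, ← sUnion_eq_biUnion]

namespace GenTop

variable {X : Type u} (G : GenTop X)

theorem empty_mem_Cov : (∅ : Set (Set X)) ∈ G.Cov :=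
  G.finite_admissible ∅ finite_empty (empty_subset _)

theorem empty_mem_Opens : (∅ : Set X) ∈ G.Opens := by
  simpa [Opens] using G.union_open ∅ G.empty_mem_Cov

theorem mem_Opens_of_mem_Cov {𝒰 : Set (Set X)} (h𝒰 : 𝒰 ∈ G.Cov) {U : Set X} (hU : U ∈ 𝒰) :
    U ∈ G.Opens :=
  ⟨𝒰, h𝒰, hU⟩

/-- Each `U ∈ 𝒰` is covered by its trace family `(U ∩ ·) '' 𝒱` (`restrict`); glue (`transitive`). -/
theorem image2_inter_mem_Cov {𝒰 𝒱 : Set (Set X)} (h𝒰 : 𝒰 ∈ G.Cov) (h𝒱 : 𝒱 ∈ G.Cov)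
    (hsub : ⋃₀ 𝒰 ⊆ ⋃₀ 𝒱) : image2 (· ∩ ·) 𝒰 𝒱 ∈ G.Cov := by
  have hrefine : ∀ U ∈ 𝒰, (U ∩ ·) '' 𝒱 ∈ G.Cov ∧ ⋃₀ ((U ∩ ·) '' 𝒱) = U := fun U hU =>
    ⟨G.restrict 𝒱 h𝒱 U (G.mem_Opens_of_mem_Cov h𝒰 hU), by
      rw [sUnion_image_inter, inter_eq_left.mpr ((subset_sUnion_of_mem hU).trans hsub)]⟩
  convert G.transitive 𝒰 h𝒰 _ hrefine using 1
  ext W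
  simp [eq_comm]

section Discrete

variable {G}

theorem forall_mem_Opens_of_range_singleton_mem_Cov
    (h : range (fun x : X => ({x} : Set X)) ∈ G.Cov) (W : Set X) : W ∈ G.Opens := by
  refine G.regular _ h W (fun x _ => ⟨_, ⟨x, rfl⟩, rfl⟩) ?_
  rintro _ ⟨x, rfl⟩
  by_cases hx : x ∈ W
  · rw [inter_singleton_of_mem hx]
    exact G.mem_Opens_of_mem_Cov h ⟨x, rfl⟩
  · rw [inter_singleton_eq_empty.mpr hx]
    exact G.empty_mem_Opens

theorem Cov_eq_univ_of_range_singleton_mem_Cov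
    (h : range (fun x : X => ({x} : Set X)) ∈ G.Cov) : G.Cov = univ := by
  refine eq_univ_of_forall fun 𝒲 => ?_
  obtain rfl | ⟨V₀, hV₀⟩ := 𝒲.eq_empty_or_nonempty
  · exact G.empty_mem_Cov
  have hopen := forall_mem_Opens_of_range_singleton_mem_Cov h
  refine G.coarsen _ (G.restrict _ h (⋃₀ 𝒲) (hopen _)) 𝒲 (fun V _ => hopen V) ?_
    (by rw [sUnion_image_inter, sUnion_range, iUnion_of_singleton, inter_univ])
  rintro _ ⟨_, ⟨x, rfl⟩, rfl⟩
  by_cases hx : x ∈ ⋃₀ 𝒲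
  · obtain ⟨V, hV, hxV⟩ := hx
    exact ⟨V, hV, inter_subset_right.trans (singleton_subset_iff.mpr hxV)⟩
  · exact ⟨V₀, hV₀, (inter_singleton_eq_empty.mpr hx).subset.trans (empty_subset _)⟩

end Discrete

end GenTop

theorem range_singleton_mem_Cov_of_fibres {X Y : Type u} {P : GenTop (X × Y)}
    (hfst : range (fun x : X => Prod.fst ⁻¹' ({x} : Set X)) ∈ P.Cov)
    (hsnd : range (fun y : Y => Prod.snd ⁻¹' ({y} : Set Y)) ∈ P.Cov) :
    range (fun p : X × Y => ({p} : Set (X × Y))) ∈ P.Cov := by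
  convert P.image2_inter_mem_Cov hfst hsnd
    (fun p _ => ⟨_, ⟨p.2, rfl⟩, rfl⟩) using 1
  rw [image2_range]
  congr! 2 with p
  ext q
  simp [Prod.ext_iff]

theorem stmt_10_general {X Y : Type u} (GX : GenTop X) (GY : GenTop Y)
    (hX : GX.Cov = Set.univ) (hY : GY.Cov = Set.univ)
    (P : GenTop (X × Y))
    (hPge : prodGen GX GY ⊆ P.Cov) :
    (∀ W : Set (X × Y), W ∈ P.Opens) ∧ P.Cov = Set.univ := by
  have hfst : range (fun x : X => Prod.fst ⁻¹' ({x} : Set X)) ∈ P.Cov :=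
    hPge (Or.inl ⟨_, hX ▸ mem_univ _, range_comp (Prod.fst ⁻¹' ·) (fun x : X => {x})⟩)
  have hsnd : range (fun y : Y => Prod.snd ⁻¹' ({y} : Set Y)) ∈ P.Cov :=
    hPge (Or.inr ⟨_, hY ▸ mem_univ _, range_comp (Prod.snd ⁻¹' ·) (fun y : Y => {y})⟩)
  have hsing := range_singleton_mem_Cov_of_fibres hfst hsnd
  exact ⟨GenTop.forall_mem_Opens_of_range_singleton_mem_Cov hsing,
    GenTop.Cov_eq_univ_of_range_singleton_mem_Cov hsing⟩

/-- The GTS-product of two topological discrete gtses (every family of subsets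
is admissible) is a topological discrete gts. -/
theorem stmt_10 {X Y : Type u} (GX : GenTop X) (GY : GenTop Y)
    (hX : GX.Cov = Set.univ) (hY : GY.Cov = Set.univ)
    (P : GenTop (X × Y))
    (hPge : prodGen GX GY ⊆ P.Cov)
    (hPmin : ∀ Q : GenTop (X × Y), prodGen GX GY ⊆ Q.Cov → P.Cov ⊆ Q.Cov) :
    (∀ W : Set (X × Y), W ∈ P.Opens) ∧ P.Cov = Set.univ :=
  stmt_10_general GX GY hX hY P hPge
end

section
/- Let X be a gts and αX a topological compactification of X_top with topology τ_{αX}. Define Op^S_{αX} = {V ∈ τ_{αX} : α⁻¹(V) ∈ Op_X} and Cov^S_{αX} = {V ⊆ Op^S_{αX} : α⁻¹(V) ∈ Cov_X}. If X is open in αX, then the remainder Y = αX ∖ X, as a subspace of the gts (αX, Op^S_{αX}, Cov^S_{αX}), is a topological gts, i.e., Cov_Y = P(Op_Y). -/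
open Set TopologicalSpace Topology

universe u

variable {X K : Type u}

/-- The opens of the strongest generalized topology in a compactification `K`
associated with the gts `X`: opens of `K` whose trace on `X` is open. -/
def OpS (G : GenTop X) [TopologicalSpace K] (α : X → K) : Set (Set K) :=
  {V : Set K | IsOpen V ∧ α ⁻¹' V ∈ G.Opens}

/-- The strongest generalized topology in a compactification `K` associated
with the generalized topology of `X`. -/
def CovS (G : GenTop X) [TopologicalSpace K] (α : X → K) : Set (Set (Set K)) :=
  {𝒱 : Set (Set K) | 𝒱 ⊆ OpS G α ∧ (fun V => α ⁻¹' V) '' 𝒱 ∈ G.Cov}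

/-!
The induced generalized topology on the remainder `Y = K \ range α` is the topological gts
of the subspace topology of `Y`. Traces of opens of `K` are subspace-open, and every family of
subspace-open sets is admissible there; so the topological gts contains the generators, and
minimality bounds `Cov_Y` by it. Conversely, as `range α` is open, each open set of `Y` is the
trace of an open `V ⊇ range α`; such `V` all have `α ⁻¹' V = univ`, so any family of them is
finite after pulling back to `X`, hence lies in `CovS`, and its traces are admissible in `Y`.
-/

theorem Set.sUnion_powerset_self {β : Type*} (s : Set β) : ⋃₀ (𝒫 s) = s :=
  subset_antisymm (sUnion_subset fun _ h => h) (subset_sUnion_of_mem (mem_powerset subset_rfl))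

namespace GenTop

def ofTopology {Y : Type u} (t : TopologicalSpace Y) : GenTop Y where
  Cov := 𝒫 {U | IsOpen U}
  univ_open := by rw [sUnion_powerset_self]; exact isOpen_univ
  finite_admissible _ _ h := by rwa [sUnion_powerset_self] at h
  union_open _ h := by rw [sUnion_powerset_self]; exact isOpen_sUnion h
  restrict _ h𝒰 V hV := by
    rw [sUnion_powerset_self] at hV
    rintro _ ⟨U, hU, rfl⟩
    exact hV.inter (h𝒰 hU)
  transitive _ _ _ hf := by
    rintro _ ⟨U, hU, hV⟩
    exact (hf U hU).1 hV
  coarsen _ _ _ h𝒱 _ _ := by rwa [sUnion_powerset_self] at h𝒱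
  regular 𝒰 _ W hW hWU := by
    simp only [sUnion_powerset_self, mem_ofPred_eq] at hWU ⊢
    rw [isOpen_iff_forall_mem_open]
    intro x hx
    obtain ⟨U, hU, hxU⟩ := hW hx
    exact ⟨W ∩ U, inter_subset_left, hWU U hU, hx, hxU⟩

theorem ofTopology_opens {Y : Type u} (t : TopologicalSpace Y) :
    (ofTopology t).Opens = {U | IsOpen U} :=
  sUnion_powerset_self _

theorem mem_cov_of_subset_singleton_univ {X : Type u} (G : GenTop X) {𝒰 : Set (Set X)}
    (h𝒰 : 𝒰 ⊆ {univ}) : 𝒰 ∈ G.Cov :=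
  G.finite_admissible 𝒰 ((finite_singleton _).subset h𝒰) fun _ hU => h𝒰 hU ▸ G.univ_open

end GenTop

/-- The paper's `Cov^S ∩₂ s`, which generates the induced generalized topology on `s`. -/
def traceCovS (G : GenTop X) [TopologicalSpace K] (α : X → K) (s : Set K) :
    Set (Set (Set s)) :=
  {𝒲 | ∃ 𝒱 ∈ CovS G α, 𝒲 = (fun V => (Subtype.val ⁻¹' V : Set s)) '' 𝒱}

theorem mem_covS_of_forall_range_subset (G : GenTop X) [TopologicalSpace K] {α : X → K}
    {𝒱 : Set (Set K)} (h𝒱 : ∀ V ∈ 𝒱, IsOpen V ∧ range α ⊆ V) : 𝒱 ∈ CovS G α := by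
  have hpre : ∀ V ∈ 𝒱, α ⁻¹' V = univ := fun V hV =>
    eq_univ_of_forall fun x => (h𝒱 V hV).2 (mem_range_self x)
  refine ⟨fun V hV => ⟨(h𝒱 V hV).1, hpre V hV ▸ G.univ_open⟩, ?_⟩
  apply G.mem_cov_of_subset_singleton_univ
  rintro _ ⟨V, hV, rfl⟩
  exact hpre V hV

theorem traceCovS_subset_ofTopology_cov (G : GenTop X) [TopologicalSpace K] (α : X → K)
    (s : Set K) : traceCovS G α s ⊆ (GenTop.ofTopology inferInstance).Cov := by
  rintro _ ⟨𝒱, h𝒱, rfl⟩ _ ⟨V, hV, rfl⟩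
  exact (h𝒱.1 hV).1.preimage continuous_subtype_val

theorem IsOpen.exists_isOpen_superset_preimage_val_eq [TopologicalSpace K] {S : Set K}
    (hS : IsOpen S) {U : Set ↥Sᶜ} (hU : IsOpen U) :
    ∃ V : Set K, IsOpen V ∧ S ⊆ V ∧ Subtype.val ⁻¹' V = U := by
  obtain ⟨W, hW, rfl⟩ := isOpen_induced_iff.mp hU
  refine ⟨W ∪ S, hW.union hS, subset_union_right, ?_⟩
  ext y
  simp

theorem ofTopology_cov_subset_traceCovS (G : GenTop X) [TopologicalSpace K] {α : X → K}
    (hopen : IsOpen (range α)) :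
    (GenTop.ofTopology inferInstance).Cov ⊆ traceCovS G α (range α)ᶜ := by
  intro 𝒲 h𝒲
  refine ⟨{V | IsOpen V ∧ range α ⊆ V ∧ Subtype.val ⁻¹' V ∈ 𝒲},
    mem_covS_of_forall_range_subset G fun V hV => ⟨hV.1, hV.2.1⟩, ?_⟩
  ext W
  constructor
  · intro hW
    obtain ⟨V, hVo, hαV, rfl⟩ := hopen.exists_isOpen_superset_preimage_val_eq (h𝒲 hW)
    exact ⟨V, ⟨hVo, hαV, hW⟩, rfl⟩
  · rintro ⟨V, ⟨-, -, hV⟩, rfl⟩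
    exact hV

theorem stmt_11_general {X K : Type u} (G : GenTop X) [TopologicalSpace K]
    (α : X → K)
    (hopen : IsOpen (Set.range α))
    (H : GenTop ↥((Set.range α)ᶜ))
    (hHge : {𝒲 : Set (Set ↥((Set.range α)ᶜ)) | ∃ 𝒱 ∈ CovS G α,
        𝒲 = (fun V => (Subtype.val ⁻¹' V : Set ↥((Set.range α)ᶜ))) '' 𝒱} ⊆ H.Cov)
    (hHmin : ∀ Q : GenTop ↥((Set.range α)ᶜ),
      {𝒲 : Set (Set ↥((Set.range α)ᶜ)) | ∃ 𝒱 ∈ CovS G α,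
        𝒲 = (fun V => (Subtype.val ⁻¹' V : Set ↥((Set.range α)ᶜ))) '' 𝒱} ⊆ Q.Cov →
      H.Cov ⊆ Q.Cov) :
    H.Cov = Set.powerset H.Opens := by
  have hCov : H.Cov = (GenTop.ofTopology inferInstance).Cov :=
    subset_antisymm (hHmin _ (traceCovS_subset_ofTopology_cov G α _))
      ((ofTopology_cov_subset_traceCovS G hopen).trans hHge)
  rw [GenTop.Opens, hCov]
  exact (congrArg Set.powerset (GenTop.ofTopology_opens _)).symm

/-- If `X` is open in a topological compactification `αX` of `X_top`, then the
remainder, as a subspace of the gts `(αX, Op^S, Cov^S)`, is a topological gts. -/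
theorem stmt_11 {X K : Type u} (G : GenTop X) [TopologicalSpace K] [CompactSpace K]
    (α : X → K) (hinj : Function.Injective α)
    (hind : @Topology.IsInducing X K G.topol _ α) (hdense : DenseRange α)
    (hopen : IsOpen (Set.range α))
    (H : GenTop ↥((Set.range α)ᶜ))
    (hHge : {𝒲 : Set (Set ↥((Set.range α)ᶜ)) | ∃ 𝒱 ∈ CovS G α,
        𝒲 = (fun V => (Subtype.val ⁻¹' V : Set ↥((Set.range α)ᶜ))) '' 𝒱} ⊆ H.Cov)
    (hHmin : ∀ Q : GenTop ↥((Set.range α)ᶜ),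
      {𝒲 : Set (Set ↥((Set.range α)ᶜ)) | ∃ 𝒱 ∈ CovS G α,
        𝒲 = (fun V => (Subtype.val ⁻¹' V : Set ↥((Set.range α)ᶜ))) '' 𝒱} ⊆ Q.Cov →
      H.Cov ⊆ Q.Cov) :
    H.Cov = Set.powerset H.Opens :=
  stmt_11_general G α hopen H hHge hHmin
end

section
/- In ZF: Let X be a dense subspace of a topological space T and f a continuous map from X into a compact Hausdorff space Y. Then f extends to a continuous map from T to Y if and only if there exists a closed base F of Y, stable under finite intersections, such that cl_T f⁻¹(A) ∩ cl_T f⁻¹(B) = ∅ for each pair A, B of disjoint members of F. -/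
/-!
Necessity is clear: for closed `A` the closure of the trace of `f ⁻¹' A` lies in `g ⁻¹' A`.
For sufficiency, by compactness of `Y` it suffices that for every `t : T` the image under `f`
of the trace of `𝓝 t` on `X` has a single cluster point; the extension is then the limit map.
Two distinct cluster points `z ≠ y` would lie in the interiors of disjoint members `A`, `B` of `F`,
which puts `t` in the closures of both `f ⁻¹' A` and `f ⁻¹' B`. Such `A` and `B` exist because a
closed base stable under finite intersections separates a point from a compact set: the members
of `F` that are neighbourhoods of the point form a downward directed family of closed sets
with empty intersection on that compact set.
-/

open Set Filter Topology

section ClosedBase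

variable {Y : Type*} [TopologicalSpace Y]

structure IsClosedBase_s14 (F : Set (Set Y)) : Prop where
  isClosed : ∀ A ∈ F, IsClosed A
  exists_superset_notMem : ∀ A : Set Y, IsClosed A → ∀ y ∉ A, ∃ B ∈ F, y ∉ B ∧ A ⊆ B

variable {F : Set (Set Y)}

theorem IsClosedBase_s14.exists_mem_nhds_notMem [T2Space Y] (hF : IsClosedBase_s14 F) {z b : Y}
    (hzb : z ≠ b) : ∃ E ∈ F, E ∈ 𝓝 z ∧ b ∉ E := by
  obtain ⟨U, V, hU, hV, hzU, hbV, hUV⟩ := t2_separation hzb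
  obtain ⟨E, hEF, hbE, hVE⟩ := hF.exists_superset_notMem Vᶜ hV.isClosed_compl b (not_not.2 hbV)
  exact ⟨E, hEF, mem_of_superset (hU.mem_nhds hzU) (hUV.subset_compl_right.trans hVE), hbE⟩

theorem IsClosedBase_s14.exists_mem_nhds_disjoint_of_isCompact [T2Space Y] (hF : IsClosedBase_s14 F)
    (hFi : ∀ A ∈ F, ∀ B ∈ F, A ∩ B ∈ F) {K : Set Y} (hK : IsCompact K) (hKne : K.Nonempty)
    {z : Y} (hzK : z ∉ K) : ∃ E ∈ F, E ∈ 𝓝 z ∧ Disjoint E K := by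
  let ι := {E // E ∈ F ∧ E ∈ 𝓝 z}
  have : Nonempty ι := by
    obtain ⟨b, hb⟩ := hKne
    obtain ⟨E, hEF, hEz, -⟩ := hF.exists_mem_nhds_notMem (hb.ne_of_notMem hzK).symm
    exact ⟨⟨E, hEF, hEz⟩⟩
  have hempty : K ∩ ⋂ E : ι, E.1 = ∅ := by
    refine eq_empty_of_forall_notMem fun b ⟨hbK, hbE⟩ => ?_
    obtain ⟨E, hEF, hEz, hbE'⟩ := hF.exists_mem_nhds_notMem (hbK.ne_of_notMem hzK).symm
    exact hbE' (mem_iInter.1 hbE ⟨E, hEF, hEz⟩)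
  have hdir : Directed (· ⊇ ·) fun E : ι => E.1 := fun E₁ E₂ =>
    ⟨⟨E₁.1 ∩ E₂.1, hFi _ E₁.2.1 _ E₂.2.1, inter_mem E₁.2.2 E₂.2.2⟩,
      inter_subset_left, inter_subset_right⟩
  obtain ⟨E, hE⟩ := hK.elim_directed_family_closed _ (fun E => hF.isClosed _ E.2.1) hempty hdir
  exact ⟨E.1, E.2.1, E.2.2, disjoint_iff_inter_eq_empty.2 (inter_comm K E.1 ▸ hE)⟩

theorem IsClosedBase_s14.exists_disjoint_mem_nhds [CompactSpace Y] [T2Space Y] (hF : IsClosedBase_s14 F)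
    (hFi : ∀ A ∈ F, ∀ B ∈ F, A ∩ B ∈ F) {z y : Y} (hzy : z ≠ y) :
    ∃ A ∈ F, ∃ B ∈ F, A ∈ 𝓝 z ∧ B ∈ 𝓝 y ∧ Disjoint A B := by
  obtain ⟨B, hBF, hBy, hzB⟩ := hF.exists_mem_nhds_notMem hzy.symm
  obtain ⟨A, hAF, hAz, hAB⟩ := hF.exists_mem_nhds_disjoint_of_isCompact hFi
    (hF.isClosed B hBF).isCompact ⟨y, mem_of_mem_nhds hBy⟩ hzB
  exact ⟨A, hAF, B, hBF, hAz, hBy, hAB⟩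

end ClosedBase

section Extension

variable {α T Y : Type*} [TopologicalSpace T] [TopologicalSpace Y] {e : α → T} {f : α → Y}

theorem closure_image_preimage_subset_preimage {g : T → Y} (hg : Continuous g)
    (hge : ∀ a, g (e a) = f a) {C : Set Y} (hC : IsClosed C) :
    closure (e '' (f ⁻¹' C)) ⊆ g ⁻¹' C :=
  closure_minimal (by rintro _ ⟨a, ha, rfl⟩; simpa [mem_preimage, hge a] using ha)
    (hC.preimage hg)

theorem mem_closure_image_preimage_of_mapClusterPt {t : T} {z : Y}
    (hz : MapClusterPt z (comap e (𝓝 t)) f) {A : Set Y} (hA : A ∈ 𝓝 z) :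
    t ∈ closure (e '' (f ⁻¹' A)) := by
  refine mem_closure_iff_nhds.2 fun V hV => ?_
  obtain ⟨a, hfa, hea⟩ := ((mapClusterPt_iff_frequently.1 hz A hA).and_eventually
    (preimage_mem_comap hV)).exists
  exact ⟨e a, hea, a, hfa, rfl⟩

variable [CompactSpace Y] [T2Space Y] {F : Set (Set Y)}

theorem IsClosedBase_s14.exists_tendsto_comap_nhds (hF : IsClosedBase_s14 F)
    (hFi : ∀ A ∈ F, ∀ B ∈ F, A ∩ B ∈ F)
    (hFd : ∀ A ∈ F, ∀ B ∈ F, Disjoint A B →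
      Disjoint (closure (e '' (f ⁻¹' A))) (closure (e '' (f ⁻¹' B))))
    (t : T) [NeBot (comap e (𝓝 t))] : ∃ c, Tendsto f (comap e (𝓝 t)) (𝓝 c) := by
  obtain ⟨y, hy⟩ := exists_clusterPt_of_compactSpace (map f (comap e (𝓝 t)))
  refine ⟨y, tendsto_nhds_of_unique_mapClusterPt fun z hz => by_contra fun hzy => ?_⟩
  obtain ⟨A, hAF, B, hBF, hAz, hBy, hAB⟩ := hF.exists_disjoint_mem_nhds hFi hzy
  exact disjoint_left.1 (hFd A hAF B hBF hAB) (mem_closure_image_preimage_of_mapClusterPt hz hAz)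
    (mem_closure_image_preimage_of_mapClusterPt hy hBy)

end Extension

/-- Taimanov-type extension theorem (Blefko–Steiner form): a continuous map
from a dense subspace `X` of `T` into a compact Hausdorff space `Y` extends
continuously over `T` iff there is a closed base `F` of `Y`, stable under
finite intersections, such that preimages of disjoint members of `F` have
disjoint closures in `T`. -/
theorem stmt_14 {T Y : Type u} [TopologicalSpace T] [TopologicalSpace Y]
    [CompactSpace Y] [T2Space Y] (X : Set T) (hX : Dense X)
    (f : ↥X → Y) (hf : Continuous f) :
    (∃ g : T → Y, Continuous g ∧ ∀ x : ↥X, g ↑x = f x) ↔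
      ∃ F : Set (Set Y),
        (∀ A ∈ F, IsClosed A) ∧
        (∀ A : Set Y, IsClosed A → ∀ y ∉ A, ∃ B ∈ F, y ∉ B ∧ A ⊆ B) ∧
        (∀ A ∈ F, ∀ B ∈ F, A ∩ B ∈ F) ∧
        (∀ A ∈ F, ∀ B ∈ F, Disjoint A B →
          Disjoint (closure (Subtype.val '' (f ⁻¹' A)))
            (closure (Subtype.val '' (f ⁻¹' B)))) := by
  constructor
  · rintro ⟨g, hg, hgf⟩
    refine ⟨{A | IsClosed A}, fun A hA => hA, fun A hA y hy => ⟨A, hA, hy, subset_rfl⟩,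
      fun A hA B hB => hA.inter hB, fun A hA B hB hAB => ?_⟩
    exact (hAB.preimage g).mono (closure_image_preimage_subset_preimage hg hgf hA)
      (closure_image_preimage_subset_preimage hg hgf hB)
  · rintro ⟨F, hFc, hFb, hFi, hFd⟩
    have hlim (t : T) : ∃ c, Tendsto f (comap (↑) (𝓝 t)) (𝓝 c) :=
      haveI := hX.comap_val_nhds_neBot t
      IsClosedBase_s14.exists_tendsto_comap_nhds ⟨hFc, hFb⟩ hFi hFd t
    exact ⟨hX.extend f, hX.continuous_extend hlim, hX.extend_eq hf⟩
end

section
/- If f : X → Y is w-continuous (or W-continuous) between gtses and the ring Cl_Y of closed sets of Y is disjunctive, then f is weakly continuous, i.e., f : X_top → Y_top is continuous. -/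
open Set TopologicalSpace Topology

universe u

/-- `𝒰 ⪯ 𝒱`: every member of `𝒰` is contained in a member of `𝒱` and the
unions agree. -/
def Refines {X : Type u} (𝒰 𝒱 : Set (Set X)) : Prop :=
  (∀ U ∈ 𝒰, ∃ V ∈ 𝒱, U ⊆ V) ∧ ⋃₀ 𝒰 = ⋃₀ 𝒱

/-- `f` is w-continuous: every finite open cover `𝒱` of `Y` admits a finite
open cover `𝒰` of `X` with `𝒰 ⪯ f⁻¹(𝒱)`. -/
def WSmallCont {X Y : Type u} (GX : GenTop X) (GY : GenTop Y) (f : X → Y) : Prop :=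
  ∀ 𝒱 ⊆ GY.Opens, 𝒱.Finite → ⋃₀ 𝒱 = Set.univ →
    ∃ 𝒰 ⊆ GX.Opens, 𝒰.Finite ∧ ⋃₀ 𝒰 = Set.univ ∧
      Refines 𝒰 ((fun V => f ⁻¹' V) '' 𝒱)

/-- `f` is W-continuous: every admissible cover `𝒱` of `Y` admits an admissible
cover `𝒰` of `X` with `𝒰 ⪯ f⁻¹(𝒱)`. -/
def WBigCont {X Y : Type u} (GX : GenTop X) (GY : GenTop Y) (f : X → Y) : Prop :=
  ∀ 𝒱 ∈ GY.Cov, ⋃₀ 𝒱 = Set.univ →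
    ∃ 𝒰 ∈ GX.Cov, ⋃₀ 𝒰 = Set.univ ∧ Refines 𝒰 ((fun V => f ⁻¹' V) '' 𝒱)

/-- A disjunctive ring of sets. -/
def IsDisjunctive {X : Type u} (C : Set (Set X)) : Prop :=
  ∀ A : Set X, (A ∈ C ∨ ∃ x, A = {x}) → ∀ y ∉ A, ∃ B ∈ C, y ∈ B ∧ B ⊆ Aᶜ

/-!
Let `V` be open in `Y` and `f x ∈ V`. Disjunctivity gives a closed `B` with `f x ∈ B ⊆ V`,
so `{V, Bᶜ}` is a finite open (hence admissible) cover of `Y`. Either continuity notion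
yields an open cover of `X` refining its preimage; the member `U` containing `x` cannot lie
in `f⁻¹(Bᶜ)`, so `x ∈ U ⊆ f⁻¹(V)`. Thus `f⁻¹(V)` is a union of open sets of `X`.
-/

namespace GenTop

variable {X Y : Type u}

theorem isOpen_topol_of_mem_opens (G : GenTop X) {U : Set X} (hU : U ∈ G.Opens) :
    IsOpen[G.topol] U :=
  GenerateOpen.basic U hU

theorem exists_closed_mem_subset_of_isDisjunctive {G : GenTop X}
    (hd : IsDisjunctive G.Closeds) {V : Set X} (hV : V ∈ G.Opens) {y : X} (hy : y ∈ V) :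
    ∃ B ∈ G.Closeds, y ∈ B ∧ B ⊆ V := by
  obtain ⟨B, hB, hyB, hBV⟩ :=
    hd Vᶜ (Or.inl (by rwa [Closeds, mem_ofPred_eq, compl_compl])) y (not_not_intro hy)
  exact ⟨B, hB, hyB, by rwa [compl_compl] at hBV⟩

def PullsBackFiniteOpenCovers (GX : GenTop X) (GY : GenTop Y) (f : X → Y) : Prop :=
  ∀ 𝒱 ⊆ GY.Opens, 𝒱.Finite → ⋃₀ 𝒱 = univ →
    ∀ x, ∃ U ∈ GX.Opens, x ∈ U ∧ ∃ V ∈ 𝒱, U ⊆ f ⁻¹' V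

theorem exists_mem_subset_preimage_of_refines {f : X → Y} {𝒰 : Set (Set X)}
    {𝒱 : Set (Set Y)} (h𝒰 : ⋃₀ 𝒰 = univ) (href : Refines 𝒰 ((f ⁻¹' ·) '' 𝒱)) (x : X) :
    ∃ U ∈ 𝒰, x ∈ U ∧ ∃ V ∈ 𝒱, U ⊆ f ⁻¹' V := by
  obtain ⟨U, hU, hxU⟩ := mem_sUnion.1 (h𝒰 ▸ mem_univ x)
  obtain ⟨_, ⟨V, hV, rfl⟩, hUV⟩ := href.1 U hU
  exact ⟨U, hU, hxU, V, hV, hUV⟩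

theorem pullsBackFiniteOpenCovers_of_wSmallCont {GX : GenTop X} {GY : GenTop Y}
    {f : X → Y} (hf : WSmallCont GX GY f) : PullsBackFiniteOpenCovers GX GY f := by
  intro 𝒱 h𝒱 hfin hcov x
  obtain ⟨𝒰, h𝒰, -, h𝒰cov, href⟩ := hf 𝒱 h𝒱 hfin hcov
  obtain ⟨U, hU, hxU, hUV⟩ := exists_mem_subset_preimage_of_refines h𝒰cov href x
  exact ⟨U, h𝒰 hU, hxU, hUV⟩

theorem pullsBackFiniteOpenCovers_of_wBigCont {GX : GenTop X} {GY : GenTop Y}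
    {f : X → Y} (hf : WBigCont GX GY f) : PullsBackFiniteOpenCovers GX GY f := by
  intro 𝒱 h𝒱 hfin hcov x
  obtain ⟨𝒰, h𝒰, h𝒰cov, href⟩ := hf 𝒱 (GY.finite_admissible 𝒱 hfin h𝒱) hcov
  obtain ⟨U, hU, hxU, hUV⟩ := exists_mem_subset_preimage_of_refines h𝒰cov href x
  exact ⟨U, subset_sUnion_of_mem h𝒰 hU, hxU, hUV⟩

theorem PullsBackFiniteOpenCovers.continuous {GX : GenTop X} {GY : GenTop Y} {f : X → Y}
    (hf : PullsBackFiniteOpenCovers GX GY f) (hd : IsDisjunctive GY.Closeds) :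
    @Continuous X Y GX.topol GY.topol f := by
  let := GX.topol
  refine continuous_generateFrom_iff.2 fun V hV => isOpen_iff_forall_mem_open.2 fun x hx => ?_
  obtain ⟨B, hB, hxB, hBV⟩ := exists_closed_mem_subset_of_isDisjunctive hd hV hx
  have hcov : ⋃₀ {V, Bᶜ} = univ := by
    rw [sUnion_pair, eq_univ_iff_forall]
    exact fun y => (em (y ∈ B)).imp (hBV ·) id
  obtain ⟨U, hU, hxU, W, hW, hUW⟩ :=
    hf {V, Bᶜ} (pair_subset hV hB) (toFinite _) hcov x
  rcases hW with rfl | rfl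
  · exact ⟨U, hUW, GX.isOpen_topol_of_mem_opens hU, hxU⟩
  · exact absurd hxB (hUW hxU)

end GenTop

/-- If `f` is w-continuous or W-continuous and `Cl_Y` is disjunctive, then `f`
is weakly continuous, i.e. continuous for the topologizations. -/
theorem stmt_19 {X Y : Type u} (GX : GenTop X) (GY : GenTop Y) (f : X → Y)
    (hf : WSmallCont GX GY f ∨ WBigCont GX GY f)
    (hd : IsDisjunctive GY.Closeds) :
    @Continuous X Y GX.topol GY.topol f :=
  (hf.elim GenTop.pullsBackFiniteOpenCovers_of_wSmallCont
    GenTop.pullsBackFiniteOpenCovers_of_wBigCont).continuous hd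
end
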